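/- Let Φ_w = (G, φ, w) be a connected positively weighted T-gain graph. Then the largest eigenvalue of A(Φ_w) equals the largest eigenvalue of A(G_w) if and only if Φ is balanced. -/

import Mathlib

/-!
If `Φ` is balanced, the gain `ζ v` of a walk from a fixed vertex to `v` does not depend on the
walk, so `φ i j = (ζ i)⁻¹ * ζ j` on every edge. Then `A(Φ_w) = D⁻¹ A(G_w) D` with `D = diag ζ`,
and the two matrices have the same spectrum.

Conversely, let `x` be an eigenvector of `A(Φ_w)` for its largest eigenvalue `λ` and `|x|` its
entrywise modulus. The triangle inequality gives
`λ ‖x‖² = x* A(Φ_w) x ≤ |x|* A(G_w) |x| ≤ λ₁(G_w) ‖x‖²`. If `λ = λ₁(G_w)`, then `|x|` is a top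
eigenvector of `A(G_w)`, which has no zero entry because `G` is connected, and every
`conj (x i) * φ i j * x j` is a nonnegative real. Hence `φ i j = (ζ i)⁻¹ * ζ j` for
`ζ v = |x v| / x v`, and every closed walk has gain 1.
-/

open Matrix
open scoped Classical

noncomputable section

namespace GG

variable {V : Type*}

/-- The gain of a walk: product of the gains of its oriented edges. -/
def walkGain {G : SimpleGraph V} (φ : V → V → ℂ) {u v : V} (p : G.Walk u v) : ℂ :=
  (p.darts.map (fun d => φ d.toProd.1 d.toProd.2)).prod

/-- `φ` is a `𝕋`-gain function on `G`: unit modulus on edges, inverse under reversal. -/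
def IsGain (G : SimpleGraph V) (φ : V → V → ℂ) : Prop :=
  (∀ i j, G.Adj i j → ‖φ i j‖ = 1) ∧ (∀ i j, G.Adj i j → φ j i = (φ i j)⁻¹)

/-- Adjacency matrix of a gain graph. -/
def gainAdj [Fintype V] [DecidableEq V] (G : SimpleGraph V) (φ : V → V → ℂ) :
    Matrix V V ℂ := fun i j => if G.Adj i j then φ i j else 0

/-- A gain graph is balanced if every cycle has gain 1. -/
def GBalanced (G : SimpleGraph V) (φ : V → V → ℂ) : Prop :=
  ∀ (u : V) (c : G.Walk u u), c.IsCycle → walkGain φ c = 1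

/-- All shortest paths between any pair of vertices have the same gain. -/
def DistCompatible (G : SimpleGraph V) (φ : V → V → ℂ) : Prop :=
  ∀ (s t : V) (p q : G.Walk s t), p.length = G.dist s t → q.length = G.dist s t →
    walkGain φ p = walkGain φ q

/-- The set of gains of shortest `s`-`t` paths. -/
def shortestGains (G : SimpleGraph V) (φ : V → V → ℂ) (s t : V) : Set ℂ :=
  {z | ∃ p : G.Walk s t, p.length = G.dist s t ∧ walkGain φ p = z}

/-- The element of `S` maximizing the real part, ties broken by maximal imaginary part
(correct for finite nonempty sets of gains). -/
def lexMaxGain (S : Set ℂ) : ℂ :=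
  ⟨sSup (Complex.re '' S), sSup (Complex.im '' {z ∈ S | z.re = sSup (Complex.re '' S)})⟩

/-- The element of `S` minimizing the real part, ties broken by minimal imaginary part. -/
def lexMinGain (S : Set ℂ) : ℂ :=
  ⟨sInf (Complex.re '' S), sInf (Complex.im '' {z ∈ S | z.re = sInf (Complex.re '' S)})⟩

/-- The maximum gain distance matrix `D^max_<(Φ)` with respect to a strict order `lt`. -/
def Dmax [Fintype V] [DecidableEq V] (G : SimpleGraph V) (φ : V → V → ℂ)
    (lt : V → V → Prop) : Matrix V V ℂ := fun s t =>
  if lt s t then lexMaxGain (shortestGains G φ s t) * (G.dist s t : ℂ)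
  else if lt t s then (starRingEnd ℂ) (lexMaxGain (shortestGains G φ t s)) * (G.dist s t : ℂ)
  else 0

/-- The minimum gain distance matrix `D^min_<(Φ)` with respect to a strict order `lt`. -/
def Dmin [Fintype V] [DecidableEq V] (G : SimpleGraph V) (φ : V → V → ℂ)
    (lt : V → V → Prop) : Matrix V V ℂ := fun s t =>
  if lt s t then lexMinGain (shortestGains G φ s t) * (G.dist s t : ℂ)
  else if lt t s then (starRingEnd ℂ) (lexMinGain (shortestGains G φ t s)) * (G.dist s t : ℂ)
  else 0

/-- Vertex order independence: the gain distance matrices agree for the standard order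
and its reverse. -/
def OrderIndependent [Fintype V] [DecidableEq V] [LinearOrder V] (G : SimpleGraph V)
    (φ : V → V → ℂ) : Prop :=
  Dmax G φ (· < ·) = Dmax G φ (fun a b => b < a) ∧
  Dmin G φ (· < ·) = Dmin G φ (fun a b => b < a)

/-- The largest (real) eigenvalue of a matrix. -/
def maxEig [Fintype V] [DecidableEq V] (A : Matrix V V ℂ) : ℝ :=
  sSup {r : ℝ | (r : ℂ) ∈ spectrum ℂ A}

/-- The spectral radius of a matrix. -/
def specRad [Fintype V] [DecidableEq V] (A : Matrix V V ℂ) : ℝ :=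
  sSup {r : ℝ | ∃ z ∈ spectrum ℂ A, ‖z‖ = r}

/-- The distance matrix of the underlying graph, as a complex matrix. -/
def distMatrix [Fintype V] [DecidableEq V] (G : SimpleGraph V) : Matrix V V ℂ :=
  fun i j => (G.dist i j : ℂ)

/-- Weighted gain adjacency matrix `A(Φ_w)`. -/
def wGainAdj [Fintype V] [DecidableEq V] (G : SimpleGraph V) (φ : V → V → ℂ)
    (w : V → V → ℝ) : Matrix V V ℂ := fun i j => if G.Adj i j then φ i j * (w i j : ℂ) else 0

/-- Weighted adjacency matrix `A(G_w)` of the underlying weighted graph. -/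
def wAdj [Fintype V] [DecidableEq V] (G : SimpleGraph V) (w : V → V → ℝ) :
    Matrix V V ℂ := fun i j => if G.Adj i j then (w i j : ℂ) else 0

def IsPotential (G : SimpleGraph V) (φ : V → V → ℂ) (ζ : V → ℂ) : Prop :=
  (∀ v, ζ v ≠ 0) ∧ ∀ i j, G.Adj i j → φ i j = (ζ i)⁻¹ * ζ j

section WalkGain

open SimpleGraph

variable {G : SimpleGraph V} {φ : V → V → ℂ}

@[simp] lemma walkGain_nil {u : V} : walkGain φ (Walk.nil : G.Walk u u) = 1 := rfl

@[simp] lemma walkGain_cons {u x v : V} (h : G.Adj u x) (p : G.Walk x v) :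
    walkGain φ (Walk.cons h p) = φ u x * walkGain φ p := by
  simp [walkGain]

@[simp] lemma walkGain_append {u v w : V} (p : G.Walk u v) (q : G.Walk v w) :
    walkGain φ (p.append q) = walkGain φ p * walkGain φ q := by
  simp [walkGain, Walk.darts_append]

lemma IsGain.ne_zero (hφ : IsGain G φ) {i j : V} (h : G.Adj i j) : φ i j ≠ 0 :=
  norm_ne_zero_iff.mp (by rw [hφ.1 i j h]; exact one_ne_zero)

lemma walkGain_ne_zero (hφ : IsGain G φ) {u v : V} (p : G.Walk u v) : walkGain φ p ≠ 0 := by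
  induction p with
  | nil => exact one_ne_zero
  | cons h p ih => exact mul_ne_zero (hφ.ne_zero h) ih

lemma walkGain_reverse (hφ : IsGain G φ) {u v : V} (p : G.Walk u v) :
    walkGain φ p.reverse = (walkGain φ p)⁻¹ := by
  induction p with
  | nil => simp
  | cons h p ih => simp [ih, hφ.2 _ _ h, mul_comm]

lemma IsPotential.walkGain_eq {ζ : V → ℂ} (hζ : IsPotential G φ ζ) {u v : V}
    (p : G.Walk u v) : walkGain φ p = (ζ u)⁻¹ * ζ v := by
  induction p with
  | nil => exact (inv_mul_cancel₀ (hζ.1 _)).symm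
  | cons h p ih =>
    rw [walkGain_cons, ih, hζ.2 _ _ h]
    field_simp [hζ.1]

lemma IsPotential.gBalanced {ζ : V → ℂ} (hζ : IsPotential G φ ζ) : GBalanced G φ :=
  fun u c _ => by rw [hζ.walkGain_eq c, inv_mul_cancel₀ (hζ.1 u)]

section Balanced

variable (hφ : IsGain G φ) (hbal : GBalanced G φ)
include hφ hbal

lemma walkGain_cons_eq_one_of_isPath {u x : V} (h : G.Adj u x) {q : G.Walk x u}
    (hq : q.IsPath) : walkGain φ (Walk.cons h q) = 1 := by
  -- `cons h q` is a cycle unless `q` just walks back along the edge `x u`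
  by_cases he : s(u, x) ∈ q.edges
  · rw [hq.eq_adj_toWalk_of_mem_edges (Sym2.eq_swap ▸ he)]
    simp [hφ.2 _ _ h, hφ.ne_zero h]
  · exact hbal u _ ((Walk.cons_isCycle_iff q h).mpr ⟨hq, he⟩)

lemma walkGain_bypass {u v : V} (p : G.Walk u v) : walkGain φ p.bypass = walkGain φ p := by
  induction p with
  | nil => rfl
  | cons h p ih =>
    rw [Walk.bypass]
    split_ifs with hs
    · have hsplit := congrArg (walkGain φ) (p.bypass.take_spec hs)
      rw [walkGain_append, ih] at hsplit
      rw [walkGain_cons, ← hsplit, ← mul_assoc, ← walkGain_cons h,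
        walkGain_cons_eq_one_of_isPath hφ hbal h (p.bypass_isPath.takeUntil hs), one_mul]
    · rw [walkGain_cons, walkGain_cons, ih]

lemma walkGain_eq_one_of_gBalanced {u : V} (c : G.Walk u u) : walkGain φ c = 1 := by
  rw [← walkGain_bypass hφ hbal c, (Walk.isPath_iff_nil.mp c.bypass_isPath).eq_nil, walkGain_nil]

lemma exists_isPotential_of_gBalanced (hconn : G.Connected) : ∃ ζ, IsPotential G φ ζ := by
  obtain ⟨o⟩ := hconn.nonempty
  let path (v : V) : G.Walk o v := (hconn.preconnected o v).some
  refine ⟨fun v => walkGain φ (path v), fun v => walkGain_ne_zero hφ _, fun i j hij => ?_⟩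
  have := walkGain_eq_one_of_gBalanced hφ hbal ((path i).append (Walk.cons hij (path j).reverse))
  rw [walkGain_append, walkGain_cons, walkGain_reverse hφ] at this
  field_simp [walkGain_ne_zero hφ] at this ⊢
  linear_combination this

end Balanced

end WalkGain

section MaxEig

open scoped ComplexOrder

variable {n : Type*} [Fintype n] [DecidableEq n] {A : Matrix n n ℂ}

lemma maxEig_eq_sSup_range_eigenvalues (hA : A.IsHermitian) :
    maxEig A = sSup (Set.range hA.eigenvalues) := by
  rw [maxEig, ← hA.spectrum_real_eq_range_eigenvalues]
  congr 1

lemma eigenvalues_le_maxEig (hA : A.IsHermitian) (i : n) : hA.eigenvalues i ≤ maxEig A := by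
  rw [maxEig_eq_sSup_range_eigenvalues hA]
  exact le_csSup (Set.finite_range _).bddAbove (Set.mem_range_self i)

lemma exists_mulVec_eq_maxEig_smul [Nonempty n] (hA : A.IsHermitian) :
    ∃ x ≠ 0, A *ᵥ x = (maxEig A : ℂ) • x := by
  obtain ⟨i, hi⟩ : maxEig A ∈ Set.range hA.eigenvalues := by
    rw [maxEig_eq_sSup_range_eigenvalues hA]
    exact (Set.range_nonempty _).csSup_mem (Set.finite_range _)
  refine ⟨hA.eigenvectorBasis i, ?_, ?_⟩
  · exact fun h => hA.eigenvectorBasis.orthonormal.ne_zero i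
      (by simpa using congrArg (WithLp.toLp 2) h)
  · rw [hA.mulVec_eigenvectorBasis, hi, RCLike.real_smul_eq_coe_smul (K := ℂ)]
    rfl

lemma posSemidef_maxEig_smul_one_sub (hA : A.IsHermitian) :
    ((maxEig A : ℂ) • 1 - A).PosSemidef := by
  refine posSemidef_iff_isHermitian_and_spectrum_nonneg.mpr
    ⟨(isHermitian_one.smul (Complex.conj_ofReal _)).sub hA, ?_⟩
  rw [← Algebra.algebraMap_eq_smul_one, ← spectrum.singleton_sub_eq, hA.spectrum_eq_image_range]
  rintro _ ⟨_, rfl, _, ⟨_, ⟨i, rfl⟩, rfl⟩, rfl⟩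
  simpa using eigenvalues_le_maxEig hA i

lemma re_star_dotProduct_mulVec_le (hA : A.IsHermitian) (x : n → ℂ) :
    (star x ⬝ᵥ (A *ᵥ x)).re ≤ maxEig A * (star x ⬝ᵥ x).re := by
  have := (Complex.nonneg_iff.mp
    ((posSemidef_maxEig_smul_one_sub hA).dotProduct_mulVec_nonneg x)).1
  rwa [sub_mulVec, smul_mulVec, one_mulVec, dotProduct_sub, dotProduct_smul, smul_eq_mul,
    Complex.sub_re, Complex.re_ofReal_mul, sub_nonneg] at this

lemma mulVec_eq_maxEig_smul_of_re_eq (hA : A.IsHermitian) {x : n → ℂ}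
    (hx : (star x ⬝ᵥ (A *ᵥ x)).re = maxEig A * (star x ⬝ᵥ x).re) :
    A *ᵥ x = (maxEig A : ℂ) • x := by
  have hM := posSemidef_maxEig_smul_one_sub hA
  have hquad : star x ⬝ᵥ (((maxEig A : ℂ) • 1 - A) *ᵥ x) = 0 := by
    apply Complex.ext _ (Complex.nonneg_iff.mp (hM.dotProduct_mulVec_nonneg x)).2.symm
    rw [sub_mulVec, smul_mulVec, one_mulVec, dotProduct_sub, dotProduct_smul, smul_eq_mul,
      Complex.sub_re, Complex.re_ofReal_mul, hx, sub_self, Complex.zero_re]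
  have := (hM.dotProduct_mulVec_zero_iff x).mp hquad
  rwa [sub_mulVec, smul_mulVec, one_mulVec, sub_eq_zero, eq_comm] at this

end MaxEig

section Domination

open scoped ComplexOrder

variable {n : Type*} [Fintype n]

lemma star_dotProduct_mulVec_eq_sum (A : Matrix n n ℂ) (x : n → ℂ) :
    star x ⬝ᵥ (A *ᵥ x) = ∑ i, ∑ j, star (x i) * A i j * x j := by
  simp only [dotProduct, mulVec, Pi.star_apply, Finset.mul_sum, mul_assoc]

lemma star_dotProduct_self_norm (x : n → ℂ) :
    star (fun i => (‖x i‖ : ℂ)) ⬝ᵥ (fun i => (‖x i‖ : ℂ)) = star x ⬝ᵥ x := by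
  simp only [dotProduct, Pi.star_apply, Complex.star_def, Complex.conj_ofReal, Complex.conj_mul']
  exact Finset.sum_congr rfl fun i _ => by ring

variable {A B : Matrix n n ℂ} (hAB : ∀ i j, B i j = ‖A i j‖)
include hAB

lemma re_star_dotProduct_mulVec_norm (x : n → ℂ) :
    (star (fun i => (‖x i‖ : ℂ)) ⬝ᵥ (B *ᵥ fun i => (‖x i‖ : ℂ))).re =
      ∑ i, ∑ j, ‖star (x i) * A i j * x j‖ := by
  simp only [star_dotProduct_mulVec_eq_sum, hAB, Complex.re_sum, norm_mul, Complex.norm_conj,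
    Complex.star_def, Complex.conj_ofReal, ← Complex.ofReal_mul, Complex.ofReal_re]

lemma re_star_dotProduct_mulVec_le_norm (x : n → ℂ) :
    (star x ⬝ᵥ (A *ᵥ x)).re ≤
      (star (fun i => (‖x i‖ : ℂ)) ⬝ᵥ (B *ᵥ fun i => (‖x i‖ : ℂ))).re := by
  rw [re_star_dotProduct_mulVec_norm hAB, star_dotProduct_mulVec_eq_sum, Complex.re_sum]
  refine Finset.sum_le_sum fun i _ => ?_
  rw [Complex.re_sum]
  exact Finset.sum_le_sum fun j _ => Complex.re_le_norm _

lemma nonneg_of_re_star_dotProduct_mulVec_eq_norm {x : n → ℂ}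
    (h : (star x ⬝ᵥ (A *ᵥ x)).re =
      (star (fun i => (‖x i‖ : ℂ)) ⬝ᵥ (B *ᵥ fun i => (‖x i‖ : ℂ))).re) (i j : n) :
    0 ≤ star (x i) * A i j * x j := by
  rw [re_star_dotProduct_mulVec_norm hAB, star_dotProduct_mulVec_eq_sum, Complex.re_sum] at h
  simp only [Complex.re_sum] at h
  have hle : ∀ i j, (star (x i) * A i j * x j).re ≤ ‖star (x i) * A i j * x j‖ :=
    fun i j => Complex.re_le_norm _
  have hrow := (Finset.sum_eq_sum_iff_of_le fun i _ => Finset.sum_le_sum fun j _ => hle i j).mp h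
    i (Finset.mem_univ i)
  exact Complex.re_eq_norm.mp
    ((Finset.sum_eq_sum_iff_of_le fun j _ => hle i j).mp hrow j (Finset.mem_univ j))

lemma norm_eigenvector_of_maxEig_eq [DecidableEq n] (hB : B.IsHermitian)
    (heq : maxEig A = maxEig B) {x : n → ℂ}
    (hx : A *ᵥ x = (maxEig A : ℂ) • x) :
    B *ᵥ (fun i => (‖x i‖ : ℂ)) = (maxEig B : ℂ) • (fun i => (‖x i‖ : ℂ)) ∧
      ∀ i j, 0 ≤ star (x i) * A i j * x j := by
  set a : n → ℂ := fun i => (‖x i‖ : ℂ)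
  have hAx : (star x ⬝ᵥ (A *ᵥ x)).re = maxEig B * (star a ⬝ᵥ a).re := by
    rw [hx, dotProduct_smul, smul_eq_mul, Complex.re_ofReal_mul, star_dotProduct_self_norm, heq]
  have hle := re_star_dotProduct_mulVec_le_norm hAB x
  have hge := re_star_dotProduct_mulVec_le hB a
  exact ⟨mulVec_eq_maxEig_smul_of_re_eq hB (by linarith),
    nonneg_of_re_star_dotProduct_mulVec_eq_norm hAB (by linarith)⟩

end Domination

section WeightedAdjacency

variable [Fintype V] [DecidableEq V] {G : SimpleGraph V} {φ : V → V → ℂ} {w : V → V → ℝ}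

lemma wGainAdj_isHermitian (hφ : IsGain G φ) (hsymm : ∀ i j, w i j = w j i) :
    (wGainAdj G φ w).IsHermitian := by
  ext i j
  simp only [conjTranspose_apply, wGainAdj, G.adj_comm j i]
  split_ifs with h
  · rw [hφ.2 _ _ h, Complex.inv_eq_conj (hφ.1 _ _ h), hsymm, star_mul', Complex.star_def,
      Complex.conj_conj, Complex.conj_ofReal]
  · exact star_zero _

lemma wAdj_isHermitian (hsymm : ∀ i j, w i j = w j i) : (wAdj G w).IsHermitian := by
  ext i j
  simp only [conjTranspose_apply, wAdj, G.adj_comm j i]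
  split_ifs
  · rw [hsymm, Complex.star_def, Complex.conj_ofReal]
  · exact star_zero _

lemma wAdj_eq_norm_wGainAdj (hφ : IsGain G φ) (hpos : ∀ i j, G.Adj i j → 0 < w i j) (i j : V) :
    wAdj G w i j = ‖wGainAdj G φ w i j‖ := by
  by_cases h : G.Adj i j
  · simp [wAdj, wGainAdj, h, hφ.1 _ _ h, abs_of_pos (hpos _ _ h)]
  · simp [wAdj, wGainAdj, h]

lemma IsPotential.maxEig_wGainAdj_eq {ζ : V → ℂ} (hζ : IsPotential G φ ζ) :
    maxEig (wGainAdj G φ w) = maxEig (wAdj G w) := by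
  let D : (Matrix V V ℂ)ˣ := ⟨diagonal ζ, diagonal ζ⁻¹, by simp [hζ.1], by simp [hζ.1]⟩
  have hconj : wGainAdj G φ w = D⁻¹ * wAdj G w * D := by
    ext i j
    simp only [D, Units.inv_mk, mul_diagonal, diagonal_mul, wGainAdj, wAdj, Pi.inv_apply]
    split_ifs with h
    · rw [hζ.2 _ _ h]; ring
    · simp
  rw [maxEig, maxEig, hconj, spectrum.units_conjugate']

end WeightedAdjacency

open scoped ComplexOrder in
lemma eq_inv_mul_of_nonneg_star_mul {a b u : ℂ} {r : ℝ} (ha : a ≠ 0) (hb : b ≠ 0)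
    (hu : ‖u‖ = 1) (hr : 0 < r) (h : 0 ≤ star a * (u * r) * b) :
    u = (‖a‖ / a)⁻¹ * (‖b‖ / b) := by
  have hz := Complex.norm_of_nonneg' h
  simp only [norm_mul, Complex.norm_conj, Complex.star_def, hu, Complex.norm_real,
    Real.norm_of_nonneg hr.le, one_mul, Complex.ofReal_mul] at hz
  have hna : (‖a‖ : ℂ) ≠ 0 := by simpa using ha
  have hr' : (r : ℂ) ≠ 0 := by exact_mod_cast hr.ne'
  field_simp
  refine mul_left_cancel₀ (mul_ne_zero hna hr') ?_
  linear_combination (-a) * hz - u * r * b * Complex.mul_conj' a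

section Forward

variable [Fintype V] [DecidableEq V] {G : SimpleGraph V} {w : V → V → ℝ}

lemma ne_zero_of_wAdj_mulVec_eq_smul (hconn : G.Connected)
    (hpos : ∀ i j, G.Adj i j → 0 < w i j) {a : V → ℝ} (ha : 0 ≤ a) (ha0 : a ≠ 0) {c : ℂ}
    (h : wAdj G w *ᵥ (fun i => (a i : ℂ)) = c • fun i => (a i : ℂ)) (v : V) : a v ≠ 0 := by
  have hstep : ∀ i j, G.Adj i j → a i = 0 → a j = 0 := by
    intro i j hij hi
    have hrow : ∑ k, (if G.Adj i k then w i k * a k else 0) = 0 := by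
      have := congrArg Complex.re (congrFun h i)
      simpa [mulVec, dotProduct, wAdj, hi, apply_ite] using this
    have hnn : ∀ k ∈ Finset.univ, 0 ≤ (if G.Adj i k then w i k * a k else 0) := fun k _ => by
      split_ifs with hk
      exacts [mul_nonneg (hpos _ _ hk).le (ha k), le_rfl]
    have := (Finset.sum_eq_zero_iff_of_nonneg hnn).mp hrow j (Finset.mem_univ j)
    simpa [hij, (hpos _ _ hij).ne'] using this
  have hwalk : ∀ {s t : V} (p : G.Walk s t), a s = 0 → a t = 0 := by
    intro s t p
    induction p with
    | nil => exact id
    | cons h _ ih => exact fun hs => ih (hstep _ _ h hs)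
  exact fun hv => ha0 (funext fun u => hwalk (hconn.preconnected v u).some hv)

lemma exists_isPotential_of_maxEig_eq {φ : V → V → ℂ} (hconn : G.Connected) (hφ : IsGain G φ)
    (hsymm : ∀ i j, w i j = w j i) (hpos : ∀ i j, G.Adj i j → 0 < w i j)
    (heq : maxEig (wGainAdj G φ w) = maxEig (wAdj G w)) : ∃ ζ, IsPotential G φ ζ := by
  have := hconn.nonempty
  obtain ⟨x, hx0, hx⟩ := exists_mulVec_eq_maxEig_smul (wGainAdj_isHermitian hφ hsymm)
  obtain ⟨hnorm, hnonneg⟩ := norm_eigenvector_of_maxEig_eq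
    (wAdj_eq_norm_wGainAdj hφ hpos) (wAdj_isHermitian hsymm) heq hx
  have hxv : ∀ v, x v ≠ 0 := fun v => norm_ne_zero_iff.mp <|
    ne_zero_of_wAdj_mulVec_eq_smul hconn hpos (fun v => norm_nonneg (x v))
      (fun h => hx0 (funext fun u => norm_eq_zero.mp (congrFun h u))) hnorm v
  refine ⟨fun v => ‖x v‖ / x v, ⟨fun v => div_ne_zero (by simpa using hxv v) (hxv v),
    fun i j hij => eq_inv_mul_of_nonneg_star_mul (hxv i) (hxv j) (hφ.1 _ _ hij) (hpos _ _ hij) ?_⟩⟩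
  simpa [wGainAdj, hij] using hnonneg i j

end Forward

/-- for a connected positively weighted gain graph, the largest eigenvalues of
`A(Φ_w)` and `A(G_w)` coincide iff `Φ` is balanced. -/
theorem weighted_maxEig_iff_balanced {V : Type*} [Fintype V] [DecidableEq V]
    (G : SimpleGraph V) (hconn : G.Connected) (φ : V → V → ℂ) (hφ : IsGain G φ)
    (w : V → V → ℝ) (hsymm : ∀ i j, w i j = w j i) (hpos : ∀ i j, G.Adj i j → 0 < w i j) :
    maxEig (wGainAdj G φ w) = maxEig (wAdj G w) ↔ GBalanced G φ := by
  constructor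
  · intro heq
    obtain ⟨ζ, hζ⟩ := exists_isPotential_of_maxEig_eq hconn hφ hsymm hpos heq
    exact hζ.gBalanced
  · intro hbal
    obtain ⟨ζ, hζ⟩ := exists_isPotential_of_gBalanced hφ hbal hconn
    exact hζ.maxEig_wGainAdj_eq

end GG
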